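/- arXiv:2411.19811 — 3 statements merged into one kernel-verified Lean document; each statement's English description precedes it below -/
import Mathlib

section
/- Let n ≥ 1 be an integer, let P(z) = 2z^n + 1, and let α ∈ ℂ. Then the inequality ∫₀^{2π} |e^{iθ}·P′(e^{iθ}) − α·P(e^{iθ})|² dθ ≤ |n − α|² · ∫₀^{2π} |P(e^{iθ})|² dθ holds if and only if Re(α) ≤ n/2. Equivalently, 4|n − α|² + |α|² ≤ 5|n − α|² if and only if Re(α) ≤ n/2. -/
open Polynomial Real

/-! On the unit circle `z P'(z) - α P(z) = 2 (n - α) z ^ n - α` and `P(z) = 2 z ^ n + 1`. Since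
`z ^ n` is orthogonal to the constants in `L²(0, 2π)`, each integral is `2π` times the sum of the
squared moduli of the two coefficients: `2π (4 |n - α|² + |α|²)` and `2π · 5`. The inequality thus
becomes `|α| ≤ |n - α|`, i.e. `α` is at least as close to `0` as to `n`, which is `Re α ≤ n / 2`. -/

theorem Polynomial.X_mul_derivative_X_pow {R : Type*} [Semiring R] (n : ℕ) :
    X * derivative (X ^ n : R[X]) = C (n : R) * X ^ n := by
  cases n with
  | zero => simp
  | succ k =>
    rw [derivative_X_pow, Nat.add_sub_cancel, ← mul_assoc, X_mul_C, mul_assoc, ← pow_succ']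

theorem integral_exp_mul_I_pow {n : ℕ} (hn : n ≠ 0) :
    ∫ θ in (0 : ℝ)..2 * π, Complex.exp (θ * Complex.I) ^ n = 0 := by
  have hc : (n * Complex.I : ℂ) ≠ 0 := by simp [hn]
  simp_rw [← Complex.exp_nat_mul, ← mul_assoc, mul_right_comm _ _ Complex.I,
    integral_exp_mul_complex hc]
  rw [show (n * Complex.I * ↑(2 * π) : ℂ) = n * (2 * π * Complex.I) by push_cast; ring,
    Complex.exp_nat_mul_two_pi_mul_I]
  simp

theorem integral_norm_sq_mul_exp_mul_I_pow_add {n : ℕ} (hn : n ≠ 0) (c d : ℂ) :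
    ∫ θ in (0 : ℝ)..2 * π, ‖c * Complex.exp (θ * Complex.I) ^ n + d‖ ^ 2
      = 2 * π * (‖c‖ ^ 2 + ‖d‖ ^ 2) := by
  set e : ℝ → ℂ := fun θ => Complex.exp (θ * Complex.I) ^ n
  have hcont : Continuous fun θ => c * starRingEnd ℂ d * e θ := by fun_prop
  have hpt (θ : ℝ) : ‖c * e θ + d‖ ^ 2
      = (‖c‖ ^ 2 + ‖d‖ ^ 2) + 2 * Complex.reCLM (c * starRingEnd ℂ d * e θ) := by
    have he : ‖e θ‖ = 1 := by simp [e, Complex.norm_exp_ofReal_mul_I]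
    rw [Complex.sq_norm, Complex.normSq_add, ← Complex.sq_norm, ← Complex.sq_norm, norm_mul, he,
      mul_one, Complex.reCLM_apply, mul_right_comm c]
  change ∫ θ in (0 : ℝ)..2 * π, ‖c * e θ + d‖ ^ 2 = _
  simp_rw [hpt]
  rw [intervalIntegral.integral_add intervalIntegrable_const
      ((by fun_prop : Continuous fun θ => 2 * Complex.reCLM (c * starRingEnd ℂ d * e θ)
        ).intervalIntegrable _ _),
    intervalIntegral.integral_const_mul, Complex.reCLM.intervalIntegral_comp_comm
      (hcont.intervalIntegrable _ _), intervalIntegral.integral_const_mul,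
    integral_exp_mul_I_pow hn]
  simp [mul_add]

theorem Complex.norm_le_norm_ofReal_sub_iff {t : ℝ} (ht : 0 < t) (z : ℂ) :
    ‖z‖ ≤ ‖(t : ℂ) - z‖ ↔ z.re ≤ t / 2 := by
  rw [← sq_le_sq₀ (norm_nonneg _) (norm_nonneg _), Complex.sq_norm, Complex.sq_norm,
    Complex.normSq_apply, Complex.normSq_apply]
  simp only [sub_re, ofReal_re, sub_im, ofReal_im, zero_sub]
  constructor <;> intro h <;> nlinarith

theorem condition_on_alpha_sharp
    (n : ℕ) (hn : 1 ≤ n) (P : Polynomial ℂ) (hPdef : P = Polynomial.C 2 * Polynomial.X ^ n + 1)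
    (α : ℂ) :
    ((∫ θ in (0:ℝ)..(2 * π),
        ‖Complex.exp (θ * Complex.I) *
            (Polynomial.derivative P).eval (Complex.exp (θ * Complex.I))
          - α * P.eval (Complex.exp (θ * Complex.I))‖ ^ (2:ℝ)
      ≤ ‖(n : ℂ) - α‖ ^ (2:ℝ) *
        ∫ θ in (0:ℝ)..(2 * π),
          ‖P.eval (Complex.exp (θ * Complex.I))‖ ^ (2:ℝ))
        ↔ α.re ≤ (n : ℝ) / 2)
    ∧ ((4 * ‖(n : ℂ) - α‖ ^ 2 + ‖α‖ ^ 2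
          ≤ 5 * ‖(n : ℂ) - α‖ ^ 2)
        ↔ α.re ≤ (n : ℝ) / 2) := by
  have hn0 : n ≠ 0 := Nat.one_le_iff_ne_zero.mp hn
  have hP (z : ℂ) : P.eval z = 2 * z ^ n + 1 := by simp [hPdef]
  have hQ (z : ℂ) : z * P.derivative.eval z - α * P.eval z = 2 * (n - α) * z ^ n + -α := by
    have h := congrArg (eval z) (X_mul_derivative_X_pow (R := ℂ) n)
    simp only [eval_mul, eval_X, eval_C, eval_pow] at h
    rw [hP, hPdef, derivative_add, derivative_C_mul, derivative_one, add_zero, eval_mul, eval_C,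
      mul_left_comm, h]
    ring
  have halg : 4 * ‖(n : ℂ) - α‖ ^ 2 + ‖α‖ ^ 2 ≤ 5 * ‖(n : ℂ) - α‖ ^ 2 ↔ α.re ≤ n / 2 := by
    rw [← Complex.norm_le_norm_ofReal_sub_iff (Nat.cast_pos.mpr hn) α, Complex.ofReal_natCast,
      ← sq_le_sq₀ (norm_nonneg _) (norm_nonneg _)]
    constructor <;> intro h <;> linarith
  refine ⟨?_, halg⟩
  simp only [Real.rpow_two, hQ]
  simp only [hP, integral_norm_sq_mul_exp_mul_I_pow_add hn0, norm_mul, norm_neg, Complex.norm_two,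
    norm_one]
  rw [← halg, show ‖(n : ℂ) - α‖ ^ 2 * (2 * π * (2 ^ 2 + 1 ^ 2)) = 2 * π * (5 * ‖(n : ℂ) - α‖ ^ 2)
    by ring, mul_pow, mul_le_mul_iff_right₀ (by positivity)]
  norm_num
end

section
/- Let F be a polynomial of degree n with complex coefficients having all its zeros in the closed unit disk |z| ≤ 1, and let P be a polynomial of degree at most n such that |P(z)| ≤ |F(z)| for all |z| = 1. Then for every α ∈ ℂ with Re(α) ≤ n/2 and every z with |z| ≥ 1, |z·P′(z) − α·P(z)| ≤ |z·F′(z) − α·F(z)|. -/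
/-!
If all zeros `a` of a nonconstant `Q` satisfy `|a| < |z|`, then each `Re (z / (z - a)) > 1 / 2`, so
`Re (z Q'(z) / Q(z)) = ∑ Re (z / (z - a))` exceeds `deg Q / 2` and
`z Q'(z) - α Q(z) ≠ 0` whenever `Re α ≤ deg Q / 2`.

The bound `|P| ≤ |F|` on the unit circle extends to `|z| ≥ 1` and to the leading coefficients by
the maximum modulus principle applied to the reversed polynomials. As `F` may vanish on the circle,
this is first done for `F (R z)`, `R > 1`, whose zeros lie inside the open disk and which dominates
`F` on the circle, and then `R → 1`.

If now `|z P'(z) - α P(z)| > |z F'(z) - α F(z)|` at some `|z| > 1`, let `μ` be the ratio of the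
right side to the left, so `|μ| < 1`. Then `H = F - μ P` still has degree `n` and no zeros outside
the closed disk, yet `z H'(z) - α H(z) = 0`, contradicting the first paragraph. The case `|z| = 1`
follows by continuity.
-/

open Polynomial

theorem norm_sub_le_norm_smul_sub {E : Type*} [NormedAddCommGroup E] [InnerProductSpace ℝ E]
    {x a : E} {R : ℝ} (ha : ‖a‖ ≤ ‖x‖) (hR : 1 ≤ R) : ‖x - a‖ ≤ ‖R • x - a‖ := by
  have hinner : inner ℝ x a ≤ ‖x‖ ^ 2 :=
    (real_inner_le_norm x a).trans (by nlinarith [norm_nonneg x])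
  refine le_of_sq_le_sq ?_ (norm_nonneg _)
  rw [norm_sub_sq_real, norm_sub_sq_real, norm_smul, real_inner_smul_left, Real.norm_eq_abs,
    abs_of_nonneg (by linarith)]
  nlinarith [mul_nonneg (sub_nonneg.2 hR) (sub_nonneg.2 hinner),
    mul_nonneg (sq_nonneg (R - 1)) (sq_nonneg ‖x‖)]

theorem one_half_lt_re_div_sub {z a : ℂ} (h : ‖a‖ < ‖z‖) : 1 / 2 < (z / (z - a)).re := by
  have hza : 0 < Complex.normSq (z - a) :=
    Complex.normSq_pos.2 (sub_ne_zero.2 (by rintro rfl; exact h.false))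
  have h2 : Complex.normSq a < Complex.normSq z := by
    simpa [Complex.normSq_eq_norm_sq] using pow_lt_pow_left₀ h (norm_nonneg a) two_ne_zero
  rw [Complex.div_re, ← add_div, lt_div_iff₀ hza]
  simp only [Complex.normSq_apply, Complex.sub_re, Complex.sub_im] at h2 hza ⊢
  nlinarith

theorem eq_zero_of_eq_mul_of_norm_le {𝕜 : Type*} [NormedDivisionRing 𝕜] {u v μ : 𝕜}
    (h : v = μ * u) (huv : ‖u‖ ≤ ‖v‖) (hμ : ‖μ‖ < 1) : v = 0 := by
  have : ‖v‖ ≤ ‖μ‖ * ‖v‖ := by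
    rw [h, norm_mul] at *
    exact mul_le_mul_of_nonneg_left huv (norm_nonneg μ)
  exact norm_le_zero_iff.1 (by nlinarith [norm_nonneg v])

theorem closure_setOf_lt_norm {E : Type*} [NormedAddCommGroup E] [NormedSpace ℝ E] {r : ℝ}
    (hr : r ≠ 0) : closure {x : E | r < ‖x‖} = {x | r ≤ ‖x‖} := by
  have : {x : E | r < ‖x‖} = (Metric.closedBall 0 r)ᶜ := by ext; simp
  rw [this, closure_compl, interior_closedBall _ hr]
  ext; simp

namespace Polynomial

theorem eval_reflect_eq_pow_mul_eval_inv {K : Type*} [Field K] {N : ℕ} {f : K[X]}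
    (hf : f.natDegree ≤ N) {w : K} (hw : w ≠ 0) :
    (reflect N f).eval w = w ^ N * f.eval w⁻¹ := by
  let _ : Invertible w⁻¹ := invertibleOfNonzero (inv_ne_zero hw)
  have h := eval₂_reflect_mul_pow (RingHom.id K) w⁻¹ N f hf
  rw [invOf_eq_inv, inv_inv, ← eval, ← eval] at h
  rw [← h, mul_left_comm, ← mul_pow, mul_inv_cancel₀ hw, one_pow, mul_one]

theorem norm_eval_le_norm_eval_real_mul {F : ℂ[X]} {z : ℂ} {R : ℝ}
    (hF : ∀ a ∈ F.roots, ‖a‖ ≤ ‖z‖) (hR : 1 ≤ R) : ‖F.eval z‖ ≤ ‖F.eval (R * z)‖ := by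
  have hnorm (w : ℂ) :
      ‖(F.roots.map (w - ·)).prod‖ = (F.roots.map fun a => ‖w - a‖).prod := by
    simpa [Multiset.map_map] using
      map_multiset_prod (normHom : ℂ →*₀ ℝ) (F.roots.map (w - ·))
  simp only [(IsAlgClosed.splits F).eval_eq_prod_roots, norm_mul, hnorm]
  gcongr
  refine Multiset.prod_map_le_prod_map₀ _ _ (fun _ _ => norm_nonneg _) fun a ha => ?_
  simpa [Complex.real_smul] using norm_sub_le_norm_smul_sub (hF a ha) hR

theorem natDegree_div_two_lt_re_mul_eval_derivative_div_eval {Q : ℂ[X]}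
    (hQ : 0 < Q.natDegree) {z : ℂ} (hroots : ∀ a ∈ Q.roots, ‖a‖ < ‖z‖) :
    (Q.natDegree : ℝ) / 2 < (z * Q.derivative.eval z / Q.eval z).re := by
  have hQz : Q.eval z ≠ 0 := fun h =>
    (hroots z ((mem_roots (ne_zero_of_natDegree_gt hQ)).2 h)).false
  have hnonempty : Q.roots ≠ ∅ := by
    rw [Multiset.empty_eq_zero, ← Multiset.card_pos, IsAlgClosed.card_roots_eq_natDegree]
    exact hQ
  rw [mul_div_assoc, (IsAlgClosed.splits Q).eval_derivative_div_eval_of_ne_zero hQz,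
    ← Multiset.sum_map_mul_left,
    show ∀ s : Multiset ℂ, s.sum.re = (s.map Complex.re).sum from
      map_multiset_sum Complex.reAddGroupHom,
    Multiset.map_map]
  calc (Q.natDegree : ℝ) / 2 = (Q.roots.map fun _ => (1 / 2 : ℝ)).sum := by
        simp [IsAlgClosed.card_roots_eq_natDegree, div_eq_mul_inv]
    _ < _ := Multiset.sum_lt_sum_of_nonempty hnonempty fun a ha => by
        simpa only [Function.comp_apply, mul_one_div] using
          one_half_lt_re_div_sub (hroots a ha)

theorem mul_eval_derivative_sub_mul_eval_ne_zero {Q : ℂ[X]} (hQ : 0 < Q.natDegree) {z α : ℂ}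
    (hroots : ∀ a ∈ Q.roots, ‖a‖ < ‖z‖) (hα : α.re ≤ Q.natDegree / 2) :
    z * Q.derivative.eval z - α * Q.eval z ≠ 0 := by
  have hQz : Q.eval z ≠ 0 := fun h =>
    (hroots z ((mem_roots (ne_zero_of_natDegree_gt hQ)).2 h)).false
  intro h
  have : z * Q.derivative.eval z / Q.eval z = α := by
    rw [div_eq_iff hQz]; linear_combination h
  linarith [this ▸ natDegree_div_two_lt_re_mul_eval_derivative_div_eval hQ hroots]

section RootsInUnitBall

variable {Q G : ℂ[X]} (hG : G ≠ 0) (hroots : ∀ a ∈ G.roots, ‖a‖ < 1)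
include hG hroots

theorem eval_reflect_natDegree_ne_zero_of_roots_lt_one {w : ℂ} (hw : ‖w‖ ≤ 1) :
    (reflect G.natDegree G).eval w ≠ 0 := by
  rcases eq_or_ne w 0 with rfl | hw0
  · rw [← coeff_zero_eq_eval_zero, coeff_reflect, revAt_zero]
    exact leadingCoeff_ne_zero.2 hG
  · rw [eval_reflect_eq_pow_mul_eval_inv le_rfl hw0]
    refine mul_ne_zero (pow_ne_zero _ hw0) fun h => ?_
    have := hroots _ ((mem_roots hG).2 h)
    rw [norm_inv, inv_lt_one₀ (norm_pos_iff.2 hw0)] at this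
    exact this.not_ge hw

variable (hQ : Q.natDegree ≤ G.natDegree) (hQG : ∀ z : ℂ, ‖z‖ = 1 → ‖Q.eval z‖ ≤ ‖G.eval z‖)
include hQ hQG

theorem norm_eval_reflect_le_of_roots_lt_one {w : ℂ} (hw : ‖w‖ ≤ 1) :
    ‖(reflect G.natDegree Q).eval w‖ ≤ ‖(reflect G.natDegree G).eval w‖ := by
  set n := G.natDegree
  have hne : ∀ w ∈ closure (Metric.ball (0 : ℂ) 1), (reflect n G).eval w ≠ 0 := fun w hw =>
    eval_reflect_natDegree_ne_zero_of_roots_lt_one hG hroots (by simpa [closure_ball] using hw)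
  have hd : DiffContOnCl ℂ (fun w => (reflect n Q).eval w / (reflect n G).eval w)
      (Metric.ball 0 1) :=
    ⟨fun w hw => ((reflect n Q).differentiableAt.div (reflect n G).differentiableAt
        (hne w (subset_closure hw))).differentiableWithinAt,
      (reflect n Q).continuous.continuousOn.div (reflect n G).continuous.continuousOn hne⟩
  have hbound := Complex.norm_le_of_forall_mem_frontier_norm_le Metric.isBounded_ball hd
    (C := 1) (fun z hz => ?_) (z := w) (by simpa [closure_ball] using hw)
  · rwa [norm_div, div_le_one (norm_pos_iff.2 (hne w (by simpa [closure_ball] using hw)))]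
      at hbound
  have hz1 : ‖z‖ = 1 := by simpa [frontier_ball] using hz
  have hz0 : z ≠ 0 := norm_ne_zero_iff.1 (by simp [hz1])
  rw [norm_div, div_le_one (norm_pos_iff.2 (hne z (frontier_subset_closure hz))),
    eval_reflect_eq_pow_mul_eval_inv hQ hz0, eval_reflect_eq_pow_mul_eval_inv le_rfl hz0,
    norm_mul, norm_mul]
  exact mul_le_mul_of_nonneg_left (hQG _ (by simp [hz1])) (norm_nonneg _)

theorem norm_eval_le_of_one_le_norm_of_roots_lt_one {z : ℂ} (hz : 1 ≤ ‖z‖) :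
    ‖Q.eval z‖ ≤ ‖G.eval z‖ := by
  have hz0 : z⁻¹ ≠ 0 := inv_ne_zero (norm_pos_iff.1 (one_pos.trans_le hz))
  have h := norm_eval_reflect_le_of_roots_lt_one hG hroots hQ hQG (w := z⁻¹)
    (by simpa using inv_le_one_of_one_le₀ hz)
  rwa [eval_reflect_eq_pow_mul_eval_inv hQ hz0, eval_reflect_eq_pow_mul_eval_inv le_rfl hz0,
    inv_inv, norm_mul, norm_mul, mul_le_mul_iff_right₀ (norm_pos_iff.2 (pow_ne_zero _ hz0))] at h

theorem norm_coeff_natDegree_le_of_roots_lt_one : ‖Q.coeff G.natDegree‖ ≤ ‖G.leadingCoeff‖ := by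
  simpa [← coeff_zero_eq_eval_zero, coeff_reflect, revAt_zero] using
    norm_eval_reflect_le_of_roots_lt_one hG hroots hQ hQG (w := 0) (by simp)

end RootsInUnitBall

section RootsInClosedUnitBall

variable {P F : ℂ[X]} (hF : F ≠ 0) (hroots : ∀ a ∈ F.roots, ‖a‖ ≤ 1)
  (hP : P.natDegree ≤ F.natDegree) (hPF : ∀ z : ℂ, ‖z‖ = 1 → ‖P.eval z‖ ≤ ‖F.eval z‖)
include hF hroots hP hPF

theorem norm_eval_le_and_norm_coeff_le_of_one_lt {R : ℝ} (hR : 1 < R) :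
    (∀ z : ℂ, 1 ≤ ‖z‖ → ‖P.eval z‖ ≤ ‖F.eval (R * z)‖) ∧
      ‖P.coeff F.natDegree‖ ≤ ‖F.leadingCoeff‖ * R ^ F.natDegree := by
  set G := F.comp (C (R : ℂ) * X)
  have hR0 : (R : ℂ) ≠ 0 := Complex.ofReal_ne_zero.2 (by positivity)
  have hGdeg : G.natDegree = F.natDegree := by
    rw [natDegree_comp, natDegree_C_mul_X _ hR0, mul_one]
  have hGlead : G.leadingCoeff = F.leadingCoeff * (R : ℂ) ^ F.natDegree := by
    rw [leadingCoeff, hGdeg, comp_C_mul_X_coeff, leadingCoeff]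
  have hG0 : G ≠ 0 := by
    rw [← leadingCoeff_ne_zero, hGlead]
    exact mul_ne_zero (leadingCoeff_ne_zero.2 hF) (pow_ne_zero _ hR0)
  have hGroots : ∀ a ∈ G.roots, ‖a‖ < 1 := by
    intro a ha
    have hFa := hroots _ ((mem_roots hF).2 (by simpa [G] using (mem_roots hG0).1 ha))
    rw [norm_mul, Complex.norm_real, Real.norm_of_nonneg (by linarith)] at hFa
    nlinarith [norm_nonneg a]
  have hPG : ∀ z : ℂ, ‖z‖ = 1 → ‖P.eval z‖ ≤ ‖G.eval z‖ := fun z hz => by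
    simpa [G] using (hPF z hz).trans
      (norm_eval_le_norm_eval_real_mul (fun a ha => hz ▸ hroots a ha) hR.le)
  refine ⟨fun z hz => ?_, ?_⟩
  · simpa [G] using norm_eval_le_of_one_le_norm_of_roots_lt_one hG0 hGroots (hGdeg ▸ hP) hPG hz
  · simpa [hGdeg, hGlead, norm_mul, Complex.norm_real, abs_of_pos (by linarith : 0 < R)] using
      norm_coeff_natDegree_le_of_roots_lt_one hG0 hGroots (hGdeg ▸ hP) hPG

theorem norm_eval_le_of_one_le_norm_of_roots_le_one {z : ℂ} (hz : 1 ≤ ‖z‖) :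
    ‖P.eval z‖ ≤ ‖F.eval z‖ := by
  have hcont : Continuous fun R : ℝ => ‖F.eval (R * z)‖ := by fun_prop
  simpa using ge_of_tendsto (hcont.continuousWithinAt (s := Set.Ioi 1) (x := 1))
    (eventually_nhdsWithin_of_forall fun R (hR : 1 < R) =>
      (norm_eval_le_and_norm_coeff_le_of_one_lt hF hroots hP hPF hR).1 z hz)

theorem norm_coeff_natDegree_le_of_roots_le_one :
    ‖P.coeff F.natDegree‖ ≤ ‖F.leadingCoeff‖ := by
  have hcont : Continuous fun R : ℝ => ‖F.leadingCoeff‖ * R ^ F.natDegree := by fun_prop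
  simpa using ge_of_tendsto (hcont.continuousWithinAt (s := Set.Ioi 1) (x := 1))
    (eventually_nhdsWithin_of_forall fun R (hR : 1 < R) =>
      (norm_eval_le_and_norm_coeff_le_of_one_lt hF hroots hP hPF hR).2)

end RootsInClosedUnitBall

theorem norm_mul_eval_derivative_sub_mul_eval_le_of_one_lt_norm {P F : ℂ[X]} (hn : 0 < F.natDegree)
    (hP : P.natDegree ≤ F.natDegree) (hroots : ∀ a ∈ F.roots, ‖a‖ ≤ 1)
    (hPF : ∀ z : ℂ, 1 ≤ ‖z‖ → ‖P.eval z‖ ≤ ‖F.eval z‖)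
    (hcoeff : ‖P.coeff F.natDegree‖ ≤ ‖F.leadingCoeff‖) {α : ℂ}
    (hα : α.re ≤ F.natDegree / 2) {z : ℂ} (hz : 1 < ‖z‖) :
    ‖z * P.derivative.eval z - α * P.eval z‖ ≤ ‖z * F.derivative.eval z - α * F.eval z‖ := by
  by_contra! hlt
  set A := z * P.derivative.eval z - α * P.eval z
  set B := z * F.derivative.eval z - α * F.eval z
  have hA : A ≠ 0 := norm_pos_iff.1 ((norm_nonneg _).trans_lt hlt)
  set μ := B / A
  have hμ : ‖μ‖ < 1 := by rwa [norm_div, div_lt_one (norm_pos_iff.2 hA)]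
  set H := F - C μ * P
  have hF0 : F ≠ 0 := ne_zero_of_natDegree_gt hn
  have hHcoeff : H.coeff F.natDegree ≠ 0 := by
    rw [coeff_sub, coeff_C_mul, sub_ne_zero]
    exact fun h => leadingCoeff_ne_zero.2 hF0 (eq_zero_of_eq_mul_of_norm_le h hcoeff hμ)
  have hHdeg : H.natDegree = F.natDegree :=
    natDegree_eq_of_le_of_coeff_ne_zero
      ((natDegree_sub_le _ _).trans (max_le le_rfl ((natDegree_C_mul_le _ _).trans hP)))
      hHcoeff
  have hHroots : ∀ a ∈ H.roots, ‖a‖ < ‖z‖ := by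
    intro a ha
    have hHa : F.eval a = μ * P.eval a := by
      simpa [H, sub_eq_zero] using (mem_roots (ne_zero_of_natDegree_gt (hHdeg ▸ hn))).1 ha
    by_contra! hza
    have hFa := eq_zero_of_eq_mul_of_norm_le hHa (hPF a (by linarith)) hμ
    linarith [hroots a ((mem_roots hF0).2 hFa)]
  refine mul_eval_derivative_sub_mul_eval_ne_zero (hHdeg ▸ hn) hHroots (hHdeg ▸ hα) ?_
  calc z * H.derivative.eval z - α * H.eval z = B - μ * A := by
        simp only [H, A, B, derivative_sub, derivative_C_mul, eval_sub, eval_mul, eval_C]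
        ring
    _ = 0 := by rw [div_mul_cancel₀ B hA, sub_self]

theorem norm_mul_eval_derivative_sub_mul_eval_le_of_one_le_norm {P F : ℂ[X]} (hF : F ≠ 0)
    (hP : P.natDegree ≤ F.natDegree) (hroots : ∀ a ∈ F.roots, ‖a‖ ≤ 1)
    (hPF : ∀ z : ℂ, ‖z‖ = 1 → ‖P.eval z‖ ≤ ‖F.eval z‖) {α : ℂ} (hα : α.re ≤ F.natDegree / 2)
    {z : ℂ} (hz : 1 ≤ ‖z‖) :
    ‖z * P.derivative.eval z - α * P.eval z‖ ≤ ‖z * F.derivative.eval z - α * F.eval z‖ := by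
  have hcoeff := norm_coeff_natDegree_le_of_roots_le_one hF hroots hP hPF
  rcases Nat.eq_zero_or_pos F.natDegree with hn | hn
  · rw [eq_C_of_natDegree_eq_zero hn, eq_C_of_natDegree_eq_zero (by omega : P.natDegree = 0)]
    simpa [leadingCoeff, hn] using mul_le_mul_of_nonneg_left hcoeff (norm_nonneg α)
  refine le_on_closure (s := {w : ℂ | 1 < ‖w‖})
    (f := fun w => ‖w * P.derivative.eval w - α * P.eval w‖)
    (g := fun w => ‖w * F.derivative.eval w - α * F.eval w‖)
    (fun w hw => norm_mul_eval_derivative_sub_mul_eval_le_of_one_lt_norm hn hP hroots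
      (fun z => norm_eval_le_of_one_le_norm_of_roots_le_one hF hroots hP hPF) hcoeff hα hw)
    (by fun_prop) (by fun_prop) ?_
  rwa [closure_setOf_lt_norm one_ne_zero]

end Polynomial

theorem comparison_first_order
    (n : ℕ) (F P : Polynomial ℂ) (hF : F.degree = n) (hP : P.degree ≤ n)
    (hFzeros : ∀ z : ℂ, F.eval z = 0 → ‖z‖ ≤ 1)
    (hPF : ∀ z : ℂ, ‖z‖ = 1 → ‖P.eval z‖ ≤ ‖F.eval z‖)
    (α : ℂ) (hα : α.re ≤ (n : ℝ) / 2) :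
    ∀ z : ℂ, 1 ≤ ‖z‖ →
      ‖z * (Polynomial.derivative P).eval z - α * P.eval z‖
        ≤ ‖z * (Polynomial.derivative F).eval z - α * F.eval z‖ := by
  have hFn : F.natDegree = n := natDegree_eq_of_degree_eq_some hF
  have hF0 : F ≠ 0 := by rintro rfl; simp at hF
  intro z hz
  exact norm_mul_eval_derivative_sub_mul_eval_le_of_one_le_norm hF0
    (hFn ▸ natDegree_le_of_degree_le hP) (fun a ha => hFzeros a (isRoot_of_mem_roots ha)) hPF
    (hFn ▸ hα) hz
end

section
/- Let P be a polynomial of degree n with complex coefficients having no zeros in the open unit disk |z| < 1, and let Q(z) = z^n·conj(P(1/conj(z))) be its conjugate-reciprocal polynomial. Then for every α ∈ ℂ with Re(α) ≤ n/2 and every z with |z| ≥ 1, |z·P′(z) − α·P(z)| ≤ |z·Q′(z) − α·Q(z)|. -/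
/-!
Since all roots `w` of `P` satisfy `|w| ≥ 1`, the factorwise identity
`|1 - conj y w|² - |y - w|² = (|y|² - 1)(|w|² - 1)` gives `|P| ≤ |Q|` on `|y| ≥ 1`, and `Q` has
no zeros in `|y| > 1`. Let `n ≥ 1` (constants are trivial) and `|z| > 1`. If
`|zP'(z) - αP(z)| > |zQ'(z) - αQ(z)|`, put `λ = (zP' - αP)/(zQ' - αQ)` at `z`; then `|λ| > 1`,
and `F = P - λQ` still has degree `n` and all its zeros in the closed unit disk, while
`zF'(z) - αF(z) = 0`. This contradicts the Laguerre-type fact that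
`Re (zF'(z)/F(z)) = Σ Re (z/(z - w)) > n/2 ≥ Re α`, each term exceeding `1/2`.
The case `|z| = 1` follows by continuity.
-/

open Polynomial ComplexConjugate

theorem IsClosed.forall_le_norm_of_forall_lt_norm {E : Type*} [NormedAddCommGroup E]
    [NormedSpace ℝ E] {p : E → Prop} (hp : IsClosed {x | p x}) {r : ℝ} (hr : r ≠ 0)
    (h : ∀ x, r < ‖x‖ → p x) (x : E) (hx : r ≤ ‖x‖) : p x := by
  have hclosure : closure {x : E | r < ‖x‖} = {x | r ≤ ‖x‖} := by
    have hcompl : {x : E | r < ‖x‖} = (Metric.closedBall 0 r)ᶜ := by ext; simp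
    rw [hcompl, closure_compl, interior_closedBall _ hr]
    ext; simp
  exact hp.closure_subset_iff.mpr h (hclosure ▸ hx)

namespace Complex

theorem one_half_lt_re_div_sub {z w : ℂ} (hwz : ‖w‖ < ‖z‖) :
    1 / 2 < (z / (z - w)).re := by
  have hzw : 0 < normSq (z - w) :=
    normSq_pos.mpr (sub_ne_zero.mpr fun h => hwz.ne (by rw [h]))
  have hnormSq : normSq w < normSq z := by
    simp only [normSq_eq_norm_sq]; gcongr
  rw [div_re, ← add_div, lt_div_iff₀ hzw]
  simp only [normSq_apply, sub_re, sub_im] at hnormSq ⊢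
  linarith

theorem norm_sub_le_norm_one_sub_conj_mul {y w : ℂ} (hy : 1 ≤ ‖y‖) (hw : 1 ≤ ‖w‖) :
    ‖y - w‖ ≤ ‖1 - conj y * w‖ := by
  have key : normSq (1 - conj y * w) - normSq (y - w) = (normSq y - 1) * (normSq w - 1) := by
    simp only [normSq_apply, sub_re, sub_im, mul_re, mul_im, conj_re, conj_im, one_re, one_im]
    ring
  have hy' : 1 ≤ normSq y := by rw [normSq_eq_norm_sq]; exact one_le_pow₀ hy
  have hw' : 1 ≤ normSq w := by rw [normSq_eq_norm_sq]; exact one_le_pow₀ hw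
  rw [← sq_le_sq₀ (norm_nonneg _) (norm_nonneg _), ← normSq_eq_norm_sq, ← normSq_eq_norm_sq]
  linarith [mul_nonneg (sub_nonneg.mpr hy') (sub_nonneg.mpr hw')]

end Complex

namespace Polynomial

noncomputable def conjReverse (P : ℂ[X]) : ℂ[X] := (P.map (starRingEnd ℂ)).reverse

variable (P : ℂ[X])

theorem eval_conjReverse {y : ℂ} (hy : y ≠ 0) :
    P.conjReverse.eval y = y ^ P.natDegree * conj (P.eval (conj y)⁻¹) := by
  let _ := invertibleOfNonzero (inv_ne_zero hy)
  have h := eval₂_reverse_mul_pow (RingHom.id ℂ) y⁻¹ (P.map (starRingEnd ℂ))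
  rw [invOf_eq_inv, inv_inv, natDegree_map, ← eval, ← eval] at h
  calc P.conjReverse.eval y
      = y ^ P.natDegree * ((P.map (starRingEnd ℂ)).reverse.eval y * y⁻¹ ^ P.natDegree) := by
        rw [mul_left_comm, ← mul_pow, mul_inv_cancel₀ hy, one_pow, mul_one, conjReverse]
    _ = y ^ P.natDegree * conj (P.eval (conj y)⁻¹) := by
        rw [h, ← eval_map_apply, map_inv₀, Complex.conj_conj]

theorem coeff_conjReverse_natDegree :
    P.conjReverse.coeff P.natDegree = conj (P.coeff 0) := by
  rw [conjReverse, coeff_reverse, natDegree_map, revAt_le le_rfl, Nat.sub_self, coeff_map]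

theorem natDegree_conjReverse (h : P.coeff 0 ≠ 0) : P.conjReverse.natDegree = P.natDegree := by
  rw [conjReverse, reverse_natDegree, natDegree_map,
    natTrailingDegree_eq_zero.mpr (.inr (by simpa using h)), Nat.sub_zero]

@[simp] theorem conjReverse_C (c : ℂ) : (C c).conjReverse = C (conj c) := by
  simp [conjReverse]

theorem norm_eval_eq_mul_prod_roots (v : ℂ) :
    ‖P.eval v‖ = ‖P.leadingCoeff‖ * (P.roots.map fun w => ‖v - w‖).prod := by
  rw [(IsAlgClosed.splits P).eval_eq_prod_roots, norm_mul,
    (map_multiset_prod (normHom : ℂ →*₀ ℝ) _ : ‖Multiset.prod _‖ = _), Multiset.map_map]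
  rfl

theorem norm_eval_conjReverse {y : ℂ} (hy : y ≠ 0) :
    ‖P.conjReverse.eval y‖ =
      ‖P.leadingCoeff‖ * (P.roots.map fun w => ‖1 - conj y * w‖).prod := by
  have hfactor (w : ℂ) : ‖y‖ * ‖(conj y)⁻¹ - w‖ = ‖1 - conj y * w‖ := by
    rw [← Complex.norm_conj y, ← norm_mul, mul_sub,
      mul_inv_cancel₀ ((_root_.map_ne_zero _).mpr hy)]
  rw [eval_conjReverse P hy, norm_mul, norm_pow, Complex.norm_conj, norm_eval_eq_mul_prod_roots,
    mul_left_comm, (IsAlgClosed.splits P).natDegree_eq_card_roots, ← Multiset.prod_replicate,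
    ← Multiset.map_const', ← Multiset.prod_map_mul]
  simp only [hfactor]

section NoZerosInDisk

variable {P} (hP : ∀ z : ℂ, ‖z‖ < 1 → P.eval z ≠ 0)
include hP

theorem one_le_norm_of_mem_roots {w : ℂ} (hw : w ∈ P.roots) : 1 ≤ ‖w‖ :=
  not_lt.mp fun h => hP w h (isRoot_of_mem_roots hw)

theorem norm_eval_le_norm_eval_conjReverse {y : ℂ} (hy : 1 ≤ ‖y‖) :
    ‖P.eval y‖ ≤ ‖P.conjReverse.eval y‖ := by
  rw [norm_eval_eq_mul_prod_roots, norm_eval_conjReverse P (norm_pos_iff.mp (by linarith))]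
  gcongr
  refine Multiset.prod_map_le_prod_map₀ _ _ (fun _ _ => norm_nonneg _) fun w hw => ?_
  exact Complex.norm_sub_le_norm_one_sub_conj_mul hy (one_le_norm_of_mem_roots hP hw)

theorem eval_conjReverse_ne_zero {y : ℂ} (hy : 1 < ‖y‖) : P.conjReverse.eval y ≠ 0 := by
  have hy0 : y ≠ 0 := norm_pos_iff.mp (by linarith)
  rw [eval_conjReverse P hy0]
  refine mul_ne_zero (pow_ne_zero _ hy0) ((_root_.map_ne_zero _).mpr (hP _ ?_))
  rwa [norm_inv, Complex.norm_conj, inv_lt_one₀ (by linarith)]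

theorem norm_leadingCoeff_le_norm_coeff_zero : ‖P.leadingCoeff‖ ≤ ‖P.coeff 0‖ := by
  rw [coeff_zero_eq_eval_zero, norm_eval_eq_mul_prod_roots]
  refine le_mul_of_one_le_right (norm_nonneg _) (Multiset.one_le_prod ?_)
  simp only [Multiset.mem_map, zero_sub, norm_neg]
  rintro _ ⟨w, hw, rfl⟩
  exact one_le_norm_of_mem_roots hP hw

end NoZerosInDisk

theorem mul_eval_derivative_sub_mul_eval_ne_zero_s16 {F : ℂ[X]} (hF : 0 < F.natDegree)
    (hroots : ∀ w : ℂ, 1 < ‖w‖ → F.eval w ≠ 0) {α : ℂ} (hα : α.re ≤ F.natDegree / 2) {z : ℂ}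
    (hz : 1 < ‖z‖) : z * F.derivative.eval z - α * F.eval z ≠ 0 := by
  have hFz : F.eval z ≠ 0 := hroots z hz
  have hsplits := IsAlgClosed.splits F
  have hlogDeriv :
      z * F.derivative.eval z / F.eval z = (F.roots.map fun w => z / (z - w)).sum := by
    rw [mul_div_assoc, hsplits.eval_derivative_div_eval_of_ne_zero hFz,
      ← Multiset.sum_map_mul_left]
    simp only [mul_one_div]
  have hre : (F.natDegree : ℝ) / 2 < (z * F.derivative.eval z / F.eval z).re := by
    have hcard : F.natDegree = Multiset.card F.roots := hsplits.natDegree_eq_card_roots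
    have hne : F.roots ≠ ∅ := fun h => hF.ne' (by rw [hcard, h]; rfl)
    calc (F.natDegree : ℝ) / 2 = (F.roots.map fun _ => (1 / 2 : ℝ)).sum := by
          rw [Multiset.map_const', Multiset.sum_replicate, nsmul_eq_mul, hcard]; ring
      _ < (F.roots.map fun w => (z / (z - w)).re).sum := by
          refine Multiset.sum_lt_sum_of_nonempty hne fun w hw => ?_
          refine Complex.one_half_lt_re_div_sub (lt_of_le_of_lt ?_ hz)
          exact not_lt.mp fun h => hroots w h (isRoot_of_mem_roots hw)
      _ = (z * F.derivative.eval z / F.eval z).re := by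
          rw [hlogDeriv, ← Complex.reLm_coe, map_multiset_sum, Multiset.map_map]
          rfl
  intro h
  have hα' : z * F.derivative.eval z / F.eval z = α := by
    rw [div_eq_iff hFz]; linear_combination h
  rw [hα'] at hre
  linarith

theorem norm_mul_eval_derivative_sub_le_of_norm_eval_le {P R : ℂ[X]} {n : ℕ} (hn : 0 < n)
    (hRdeg : R.natDegree = n) (hPdeg : P.natDegree ≤ n) (hR : ∀ w : ℂ, 1 < ‖w‖ → R.eval w ≠ 0)
    (hcoeff : ‖P.coeff n‖ ≤ ‖R.coeff n‖) (hPR : ∀ w : ℂ, 1 < ‖w‖ → ‖P.eval w‖ ≤ ‖R.eval w‖)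
    {α : ℂ} (hα : α.re ≤ n / 2) {z : ℂ} (hz : 1 < ‖z‖) :
    ‖z * P.derivative.eval z - α * P.eval z‖ ≤ ‖z * R.derivative.eval z - α * R.eval z‖ := by
  subst hRdeg
  have hB : z * R.derivative.eval z - α * R.eval z ≠ 0 :=
    mul_eval_derivative_sub_mul_eval_ne_zero_s16 hn hR hα hz
  by_contra! hAB
  obtain ⟨lam, hlamAB⟩ : ∃ lam : ℂ, z * P.derivative.eval z - α * P.eval z =
      lam * (z * R.derivative.eval z - α * R.eval z) := ⟨_, (div_mul_cancel₀ _ hB).symm⟩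
  have hlam : 1 < ‖lam‖ := by
    rw [hlamAB, norm_mul] at hAB
    exact (lt_mul_iff_one_lt_left (norm_pos_iff.mpr hB)).mp hAB
  set F := P - C lam * R
  have hFcoeff : F.coeff R.natDegree ≠ 0 := by
    have hRlead : 0 < ‖R.leadingCoeff‖ := by
      rw [norm_pos_iff, leadingCoeff_ne_zero]; rintro rfl; simp at hn
    rw [coeff_sub, coeff_C_mul, sub_ne_zero]
    intro h
    rw [h, norm_mul, ← leadingCoeff] at hcoeff
    exact hcoeff.not_gt (lt_mul_of_one_lt_left hRlead hlam)
  have hFdeg : F.natDegree = R.natDegree :=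
    natDegree_eq_of_le_of_coeff_ne_zero
      ((natDegree_sub_le_of_le hPdeg (natDegree_C_mul_le lam R)).trans (max_self _).le) hFcoeff
  have hF : ∀ w : ℂ, 1 < ‖w‖ → F.eval w ≠ 0 := by
    intro w hw h
    rw [eval_sub, eval_mul, eval_C, sub_eq_zero] at h
    have hle := hPR w hw
    rw [h, norm_mul] at hle
    exact hle.not_gt (lt_mul_of_one_lt_left (norm_pos_iff.mpr (hR w hw)) hlam)
  refine mul_eval_derivative_sub_mul_eval_ne_zero_s16 (hFdeg ▸ hn) hF (hFdeg ▸ hα) hz ?_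
  simp only [F, derivative_sub, derivative_C_mul, eval_sub, eval_mul, eval_C]
  linear_combination hlamAB

theorem norm_mul_eval_derivative_sub_le_conjReverse {P : ℂ[X]}
    (hP : ∀ z : ℂ, ‖z‖ < 1 → P.eval z ≠ 0) (hn : 0 < P.natDegree) {α : ℂ}
    (hα : α.re ≤ P.natDegree / 2) {z : ℂ} (hz : 1 < ‖z‖) :
    ‖z * P.derivative.eval z - α * P.eval z‖ ≤
      ‖z * P.conjReverse.derivative.eval z - α * P.conjReverse.eval z‖ := by
  have hcoeff : P.coeff 0 ≠ 0 := by rw [coeff_zero_eq_eval_zero]; exact hP 0 (by simp)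
  refine norm_mul_eval_derivative_sub_le_of_norm_eval_le hn (natDegree_conjReverse P hcoeff) le_rfl
    (fun w hw => eval_conjReverse_ne_zero hP hw) ?_
    (fun w hw => norm_eval_le_norm_eval_conjReverse hP hw.le) hα hz
  rw [coeff_conjReverse_natDegree, Complex.norm_conj]
  exact norm_leadingCoeff_le_norm_coeff_zero hP

end Polynomial

theorem comparison_with_conjugate_reciprocal
    (n : ℕ) (P : Polynomial ℂ) (hP : P.degree = n)
    (hz : ∀ z : ℂ, ‖z‖ < 1 → P.eval z ≠ 0)
    (Q : Polynomial ℂ)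
    (hQ : ∀ z : ℂ, z ≠ 0 →
      Q.eval z = z ^ n * (starRingEnd ℂ) (P.eval (1 / (starRingEnd ℂ) z)))
    (α : ℂ) (hα : α.re ≤ (n : ℝ) / 2) :
    ∀ z : ℂ, 1 ≤ ‖z‖ →
      ‖z * (Polynomial.derivative P).eval z - α * P.eval z‖
        ≤ ‖z * (Polynomial.derivative Q).eval z - α * Q.eval z‖ := by
  obtain rfl : P.natDegree = n := natDegree_eq_of_degree_eq_some hP
  obtain rfl : Q = P.conjReverse := eq_of_infinite_eval_eq _ _ <|
    (Set.finite_singleton 0).infinite_compl.mono fun y hy => by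
      rw [Set.mem_ofPred_eq, hQ y hy, eval_conjReverse P hy, one_div]
  rcases Nat.eq_zero_or_pos P.natDegree with h0 | hn
  · rw [eq_C_of_natDegree_eq_zero h0]
    simp
  · refine IsClosed.forall_le_norm_of_forall_lt_norm ?_ one_ne_zero
      fun z hz' => norm_mul_eval_derivative_sub_le_conjReverse hz hn hα hz'
    exact isClosed_le (by fun_prop) (by fun_prop)
end
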